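/- arXiv:2501.03302 — 5 statements merged into one kernel-verified Lean document; each statement's English description precedes it below -/
import Mathlib

section
/- Let F be an intersection-closed family of subsets of N = {1,...,n}, and let A ⊆ [i-1] with A ∈ F and A ∪ {i} ∉ F (a 'discarding set at level i'). Then any two sets X, Y ⊆ {i+1,...,n} with A ∪ {i} ∪ X ∈ F and A ∪ {i} ∪ Y ∈ F satisfy X ∩ Y ≠ ∅. -/
open Finset

def interClosed (F : Finset (Finset ℕ)) : Prop := ∀ A ∈ F, ∀ B ∈ F, A ∩ B ∈ F

def Dset (F : Finset (Finset ℕ)) (i : ℕ) : Finset (Finset ℕ) :=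
  (Finset.Icc 1 (i-1)).powerset.filter (fun A => A ∈ F ∧ insert i A ∉ F)

def IsRoot (F : Finset (Finset ℕ)) (n i : ℕ) (A : Finset ℕ) (k : ℕ) : Prop :=
  k ∈ Finset.Icc (i+1) n ∧ ∀ X ⊆ Finset.Icc (i+1) n, insert i A ∪ X ∈ F → k ∈ X

def goodH (F : Finset (Finset ℕ)) (n i : ℕ) (A : Finset ℕ) (HA : Finset (Finset ℕ)) : Prop :=
  ((¬ ∃ X ⊆ Finset.Icc (i+1) n, insert i A ∪ X ∈ F) ∧
    HA = (Finset.Icc (i+1) n).powerset.image (fun X => insert i A ∪ X))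
  ∨ (∃ k, IsRoot F n i A k ∧
    HA = (((Finset.Icc (i+1) n).powerset.filter (fun X => k ∉ X)).image
      (fun X => insert i A ∪ X)))

def Hspec (F : Finset (Finset ℕ)) (n : ℕ) (H : ℕ → Finset ℕ → Finset (Finset ℕ)) : Prop :=
  ∀ i A, A ∈ Dset F i → goodH F n i A (H i A)

theorem interClosed.mem_of_union_mem {F : Finset (Finset ℕ)} (hF : interClosed F)
    {S X Y : Finset ℕ} (hX : S ∪ X ∈ F) (hY : S ∪ Y ∈ F) (hXY : Disjoint X Y) : S ∈ F := by
  have hmeet : (S ∪ X) ∩ (S ∪ Y) = S := by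
    rw [← union_inter_distrib_left, disjoint_iff_inter_eq_empty.mp hXY, union_empty]
  exact hmeet ▸ hF _ hX _ hY

theorem stmt0_general (i : ℕ) (F : Finset (Finset ℕ)) (hF : interClosed F)
    (A : Finset ℕ)
    (hA3 : insert i A ∉ F)
    (X Y : Finset ℕ)
    (hXF : insert i A ∪ X ∈ F) (hYF : insert i A ∪ Y ∈ F) :
    X ∩ Y ≠ ∅ :=
  fun hXY => hA3 (hF.mem_of_union_mem hXF hYF (disjoint_iff_inter_eq_empty.mpr hXY))

theorem stmt0 (n i : ℕ) (F : Finset (Finset ℕ)) (hF : interClosed F)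
    (A : Finset ℕ) (hA1 : A ⊆ Finset.Icc 1 (i-1)) (hA2 : A ∈ F)
    (hA3 : insert i A ∉ F)
    (X Y : Finset ℕ) (hX : X ⊆ Finset.Icc (i+1) n) (hY : Y ⊆ Finset.Icc (i+1) n)
    (hXF : insert i A ∪ X ∈ F) (hYF : insert i A ∪ Y ∈ F) :
    X ∩ Y ≠ ∅ :=
  stmt0_general i F hF A hA3 X Y hXF hYF
end

section
/- Let F be intersection-closed over N = {1,...,n}. Let A be a discarding set at level i and B a discarding set at level j, with A ≠ B and 1 ≤ j ≤ i ≤ n. Then the excluded families H_i^A and H_j^B are disjoint, where H_i^A consists of all sets A ∪ {i} ∪ X with X ⊆ {i+1,...,n} (and, if A has a root k > i, additionally requiring k ∉ X), and similarly for H_j^B. -/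
open Finset

/-!
A set `S = A ∪ {i} ∪ X` of `H_i^A` determines `A` as its part below `i`, so `i = j`
forces `A = B`. If `j < i`, then `S = B ∪ {j} ∪ Y` also lies in `H_j^B`, and the part of `S` below `i`
gives `A = B ∪ {j} ∪ Z` with `Z ⊆ Y`. As `A ∈ F`, this exhibits an extension of `B ∪ {j}` inside `F`
that `Y` contains, which is impossible both without a root and with a root `k ∉ Y`.
-/

section Order

variable {α : Type*} [LinearOrder α] {i j : α} {A B X Y : Finset α}

theorem filter_lt_insert_union (hA : ∀ a ∈ A, a < i) (hX : ∀ x ∈ X, i < x) :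
    (insert i A ∪ X).filter (· < i) = A := by
  rw [filter_union, filter_insert, if_neg (lt_irrefl i), filter_true_of_mem hA,
    filter_false_of_mem fun x hx => (hX x hx).not_gt, union_empty]

theorem filter_lt_insert_union_of_lt (hji : j < i) (hB : ∀ b ∈ B, b < j) :
    (insert j B ∪ Y).filter (· < i) = insert j B ∪ Y.filter (· < i) := by
  rw [filter_union, filter_insert, if_pos hji,
    filter_true_of_mem fun b hb => (hB b hb).trans hji]

end Order

theorem lt_of_mem_Dset {F : Finset (Finset ℕ)} {i a : ℕ} {A : Finset ℕ} (hA : A ∈ Dset F i)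
    (ha : a ∈ A) : a < i := by
  have := mem_Icc.1 ((mem_powerset.1 (mem_filter.1 hA).1) ha)
  omega

theorem mem_of_mem_Dset {F : Finset (Finset ℕ)} {i : ℕ} {A : Finset ℕ} (hA : A ∈ Dset F i) :
    A ∈ F :=
  (mem_filter.1 hA).2.1

theorem lt_of_mem_Icc_succ {i n x : ℕ} {X : Finset ℕ} (hX : X ⊆ Icc (i + 1) n) (hx : x ∈ X) :
    i < x :=
  Nat.lt_of_succ_le (mem_Icc.1 (hX hx)).1

/-- Without a root no extension of `A ∪ {i}` lies in `F`; with a root `k`, every such extension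
contains `k`, which `X` avoids. -/
theorem goodH.exists_of_mem {F H : Finset (Finset ℕ)} {n i : ℕ} {A S : Finset ℕ}
    (hH : goodH F n i A H) (hS : S ∈ H) :
    ∃ X ⊆ Icc (i + 1) n, insert i A ∪ X = S ∧ ∀ Z ⊆ X, insert i A ∪ Z ∉ F := by
  rcases hH with ⟨hnone, rfl⟩ | ⟨k, ⟨-, hroot⟩, rfl⟩
  · obtain ⟨X, hX, rfl⟩ := mem_image.1 hS
    exact ⟨X, mem_powerset.1 hX, rfl, fun Z hZX hZ =>
      hnone ⟨Z, hZX.trans (mem_powerset.1 hX), hZ⟩⟩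
  · obtain ⟨X, hX, rfl⟩ := mem_image.1 hS
    obtain ⟨hX, hkX⟩ := mem_filter.1 hX
    exact ⟨X, mem_powerset.1 hX, rfl, fun Z hZX hZ =>
      hkX (hZX (hroot Z (hZX.trans (mem_powerset.1 hX)) hZ))⟩

theorem stmt3_general (n i j : ℕ) (F : Finset (Finset ℕ))
    (hji : j ≤ i)
    (A B : Finset ℕ) (hA : A ∈ Dset F i) (hB : B ∈ Dset F j) (hAB : A ≠ B)
    (HA HB : Finset (Finset ℕ))
    (hHA : goodH F n i A HA) (hHB : goodH F n j B HB) :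
    Disjoint HA HB := by
  refine disjoint_left.2 fun S hSA hSB => ?_
  obtain ⟨X, hX, rfl, -⟩ := hHA.exists_of_mem hSA
  obtain ⟨Y, hY, hS, hY_avoids⟩ := hHB.exists_of_mem hSB
  have hA_eq : (insert i A ∪ X).filter (· < i) = A :=
    filter_lt_insert_union (fun _ => lt_of_mem_Dset hA) (fun _ => lt_of_mem_Icc_succ hX)
  rcases hji.eq_or_lt with rfl | hji
  · refine hAB ?_
    rw [← hA_eq, ← hS]
    exact filter_lt_insert_union (fun _ => lt_of_mem_Dset hB) (fun _ => lt_of_mem_Icc_succ hY)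
  · refine hY_avoids (Y.filter (· < i)) (filter_subset _ _) ?_
    rw [← filter_lt_insert_union_of_lt hji (fun _ => lt_of_mem_Dset hB), hS, hA_eq]
    exact mem_of_mem_Dset hA

theorem stmt3 (n i j : ℕ) (F : Finset (Finset ℕ)) (hF : interClosed F)
    (hj1 : 1 ≤ j) (hji : j ≤ i) (hin : i ≤ n)
    (A B : Finset ℕ) (hA : A ∈ Dset F i) (hB : B ∈ Dset F j) (hAB : A ≠ B)
    (HA HB : Finset (Finset ℕ))
    (hHA : goodH F n i A HA) (hHB : goodH F n j B HB) :
    Disjoint HA HB :=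
  stmt3_general n i j F hji A B hA hB hAB HA HB hHA hHB
end

section
/- Let F be intersection-closed over N = {1,...,n} and A discarding at level i. Then no set in H_i^A belongs to F_i = {S ∈ F : i ∈ S}, i.e., every set of the form A ∪ {i} ∪ X with X ⊆ {i+1,...,n} (with k ∉ X when A has root k) is not a member of F. -/
open Finset

theorem exists_forall_mem_of_union_mem {α : Type*} [DecidableEq α] {F : Set (Finset α)}
    (hF : ∀ A ∈ F, ∀ B ∈ F, A ∩ B ∈ F) {B S X : Finset α} (hB : B ∉ F) (hXS : X ⊆ S)
    (hX : B ∪ X ∈ F) : ∃ k ∈ S, ∀ Y ⊆ S, B ∪ Y ∈ F → k ∈ Y := by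
  by_contra! hnone
  -- Intersecting with a set that avoids some `k ∈ X` shrinks `X` while staying in `F`,
  -- so induction on `X` descends all the way to `B ∪ ∅ = B`.
  induction X using Finset.strongInduction with
  | H X ih =>
    obtain rfl | ⟨k, hk⟩ := X.eq_empty_or_nonempty
    · exact hB (by simpa using hX)
    obtain ⟨Y, hYS, hY, hkY⟩ := hnone k (hXS hk)
    have hXY : X ∩ Y ⊂ X := ⟨inter_subset_left, fun h => hkY (mem_inter.mp (h hk)).2⟩
    refine ih _ hXY (inter_subset_left.trans hXS) ?_
    rw [union_inter_distrib_left]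
    exact hF _ hX _ hY

theorem stmt5 (n i : ℕ) (F : Finset (Finset ℕ)) (hF : interClosed F)
    (A : Finset ℕ) (hA : A ∈ Dset F i) :
    ((¬ ∃ k, IsRoot F n i A k) →
      ∀ X ⊆ Finset.Icc (i+1) n, insert i A ∪ X ∉ F) ∧
    (∀ k, IsRoot F n i A k →
      ∀ X ⊆ Finset.Icc (i+1) n, k ∉ X → insert i A ∪ X ∉ F) := by
  have hiA : insert i A ∉ F := (mem_filter.mp hA).2.2
  refine ⟨fun hnoRoot X hX hXF => hnoRoot ?_, fun k hk X hX hkX hXF => hkX (hk.2 X hX hXF)⟩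
  exact exists_forall_mem_of_union_mem (F := ↑F) (fun B hB C hC => hF B hB C hC) hiA hX hXF
end

section
/- Let F ⊆ 2^N be intersection-closed with ∅ ∈ F. Then |F_1| ≤ 2^{n-1} − Σ_{A ∈ D_1} |H_1^A|, where D_1 is the set of discarding sets at level 1 and H_1^A the family of sets excluded by A. -/
/-! Every set in `F₁` and every set excluded by the discarding set `∅` has the form
`{1} ∪ X` with `X ⊆ {2, …, n}`, and there are `2^(n-1)` such sets. The excluded sets
are not in `F`: either no set of this form lies in `F`, or the excluded sets avoid a
root `k` that every member of `F` of this form contains. So `F₁` and `H₁^∅` are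
disjoint in the cube. -/

open Finset

theorem card_image_insert_powerset {α : Type*} [DecidableEq α] {a : α} {s : Finset α}
    (ha : a ∉ s) : #(s.powerset.image (insert a)) = 2 ^ #s := by
  rw [card_image_of_injOn, card_powerset]
  exact insert_erase_invOn.2.injOn.mono fun t ht ↦ notMem_mono (mem_powerset.1 ht) ha

theorem filter_mem_subset_image_insert {α : Type*} [DecidableEq α] {a : α} {s : Finset α}
    {F : Finset (Finset α)} (hF : ∀ S ∈ F, S ⊆ insert a s) :
    F.filter (a ∈ ·) ⊆ s.powerset.image (insert a) := by
  intro S hS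
  obtain ⟨hSF, haS⟩ := mem_filter.1 hS
  exact mem_image.2
    ⟨S.erase a, mem_powerset.2 (subset_insert_iff.1 (hF S hSF)), insert_erase haS⟩

theorem card_filter_mem_add_card_le {α : Type*} [DecidableEq α] {a : α} {s : Finset α}
    {F HA : Finset (Finset α)} (ha : a ∉ s) (hF : ∀ S ∈ F, S ⊆ insert a s)
    (hHA : HA ⊆ s.powerset.image (insert a)) (hdisj : Disjoint F HA) :
    #(F.filter (a ∈ ·)) + #HA ≤ 2 ^ #s := by
  rw [← card_image_insert_powerset ha,
    ← card_union_of_disjoint (disjoint_of_subset_left (filter_subset _ _) hdisj)]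
  exact card_le_card (union_subset (filter_mem_subset_image_insert hF) hHA)

section goodH

variable {F : Finset (Finset ℕ)} {n i : ℕ} {A : Finset ℕ} {HA : Finset (Finset ℕ)}

theorem goodH.subset (h : goodH F n i A HA) :
    HA ⊆ (Icc (i + 1) n).powerset.image (insert i A ∪ ·) := by
  rcases h with ⟨-, rfl⟩ | ⟨k, -, rfl⟩
  · exact Subset.rfl
  · exact image_subset_image (filter_subset _ _)

theorem goodH.disjoint (h : goodH F n i A HA) : Disjoint F HA := by
  rw [disjoint_right]
  rcases h with ⟨hno, rfl⟩ | ⟨k, ⟨-, hroot⟩, rfl⟩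
  · intro S hS hSF
    obtain ⟨X, hX, rfl⟩ := mem_image.1 hS
    exact hno ⟨X, mem_powerset.1 hX, hSF⟩
  · intro S hS hSF
    obtain ⟨X, hX, rfl⟩ := mem_image.1 hS
    obtain ⟨hXsub, hkX⟩ := mem_filter.1 hX
    exact hkX (hroot X (mem_powerset.1 hXsub) hSF)

end goodH

theorem Dset_one_subset (F : Finset (Finset ℕ)) : Dset F 1 ⊆ {∅} := by
  intro A hA
  simpa [Dset] using (mem_filter.1 hA).1

theorem stmt6_general (n : ℕ) (F : Finset (Finset ℕ))
    (hFsub : F ⊆ (Finset.Icc 1 n).powerset)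
    (H : ℕ → Finset ℕ → Finset (Finset ℕ)) (hH : Hspec F n H) :
    ((F.filter (fun S => 1 ∈ S)).card : ℤ) ≤
      (2 : ℤ) ^ (n - 1) - ∑ A ∈ Dset F 1, ((H 1 A).card : ℤ) := by
  have h1 : (1 : ℕ) ∉ Icc 2 n := by simp
  have hF : ∀ S ∈ F, S ⊆ insert 1 (Icc 2 n) := fun S hS x hx ↦ by
    have := mem_powerset.1 (hFsub hS) hx
    simp only [mem_insert, mem_Icc] at this ⊢
    omega
  have hcard : #(Icc 2 n) = n - 1 := by simp
  suffices #(F.filter (1 ∈ ·)) + ∑ A ∈ Dset F 1, #(H 1 A) ≤ 2 ^ (n - 1) by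
    rw [le_sub_iff_add_le]; exact_mod_cast this
  rcases subset_singleton_iff.1 (Dset_one_subset F) with hD | hD
  · simpa [hD, hcard] using
      card_filter_mem_add_card_le h1 hF (empty_subset _) (disjoint_empty_right F)
  · have hgood := hH 1 ∅ (hD ▸ mem_singleton_self ∅)
    have hsub : H 1 ∅ ⊆ (Icc 2 n).powerset.image (insert 1) := by
      have hins : (insert 1 (∅ : Finset ℕ) ∪ ·) = insert 1 := funext fun X ↦ by
        rw [insert_eq, union_empty, ← insert_eq]
      simpa [hins] using hgood.subset
    simpa [hD, hcard] using card_filter_mem_add_card_le h1 hF hsub hgood.disjoint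

theorem stmt6 (n : ℕ) (hn : 1 ≤ n) (F : Finset (Finset ℕ))
    (hFsub : F ⊆ (Finset.Icc 1 n).powerset)
    (hF : interClosed F) (hempty : ∅ ∈ F)
    (H : ℕ → Finset ℕ → Finset (Finset ℕ)) (hH : Hspec F n H) :
    ((F.filter (fun S => 1 ∈ S)).card : ℤ) ≤
      (2 : ℤ) ^ (n - 1) - ∑ A ∈ Dset F 1, ((H 1 A).card : ℤ) :=
  stmt6_general n F hFsub H hH
end

section
/- Let F ⊆ 2^N be intersection-closed with F ≠ F_1 and |F_1| ≥ ... ≥ |F_n|, and t^i as above. Then for every 1 ≤ i ≤ n, 2^{n-i} · |F \ (F_i ∪ ... ∪ F_n)| ≥ t^{i-1}. -/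
open Finset

/-!
Write `G_i = F \ (F_i ∪ ⋯ ∪ F_n)` (`avoiding F i n`). Intersection-closedness and the ordering
of the `|F_j|` force `∅ ∈ F`, so `|G_1| ≥ 1`. Passing from `G_i` to `G_{i+1}`, every `A ∈ G_i`
stays and `insert i A` joins unless `A` is discarding, so `|G_{i+1}| ≥ 2|G_i| - |D_i|`; each
excluded family `H_i^A` has at least `2^{n-i-1}` members, so induction on `i` gives the bound.
-/

lemma interClosed.exists_mem_subset_forall {F : Finset (Finset ℕ)} (hF : interClosed F)
    (hFne : F.Nonempty) : ∃ M ∈ F, ∀ S ∈ F, M ⊆ S :=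
  ⟨F.inf' hFne id, inf'_mem (F : Set (Finset ℕ)) hF F hFne id fun _ h => h,
    fun _ hS => inf'_le id hS⟩

lemma empty_mem_of_card_filter_le {n : ℕ} {F : Finset (Finset ℕ)}
    (hFsub : F ⊆ (Icc 1 n).powerset) (hF : interClosed F)
    (hmono : ∀ i ∈ Icc 1 n, ∀ j ∈ Icc 1 n, i ≤ j →
      (F.filter (fun S => j ∈ S)).card ≤ (F.filter (fun S => i ∈ S)).card)
    (hne : F.filter (fun S => 1 ∈ S) ≠ F) : ∅ ∈ F := by
  have hFne : F.Nonempty := nonempty_iff_ne_empty.mpr fun h => hne (by simp [h])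
  obtain ⟨M, hM, hMsub⟩ := hF.exists_mem_subset_forall hFne
  obtain rfl | ⟨m, hm⟩ := M.eq_empty_or_nonempty
  · exact hM
  -- an element `m` of the least member lies in every member, so `|F_m| = |F| > |F_1|`
  have hmIcc : m ∈ Icc 1 n := mem_powerset.mp (hFsub hM) hm
  have hFm : F.filter (fun S => m ∈ S) = F := filter_true_of_mem fun S hS => hMsub S hS hm
  have hle := hmono 1 (by simp only [mem_Icc] at hmIcc ⊢; omega) m hmIcc (mem_Icc.mp hmIcc).1
  rw [hFm] at hle
  exact absurd (eq_of_subset_of_card_le (filter_subset _ _) hle) hne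

lemma card_image_union_powerset {B U : Finset ℕ} (hBU : Disjoint B U) (P : Finset (Finset ℕ))
    (hP : P ⊆ U.powerset) : (P.image (B ∪ ·)).card = P.card := by
  refine card_image_of_injOn fun X hX Y hY hXY => ?_
  have hBX := hBU.mono_right (mem_powerset.mp (hP hX))
  have hBY := hBU.mono_right (mem_powerset.mp (hP hY))
  rw [← union_sdiff_cancel_left hBX, ← union_sdiff_cancel_left hBY]
  exact congrArg (· \ B) hXY

lemma goodH.two_pow_le_card {F : Finset (Finset ℕ)} {n i : ℕ} {A : Finset ℕ}
    {HA : Finset (Finset ℕ)} (hA : A ⊆ Icc 1 (i - 1)) (hg : goodH F n i A HA) :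
    2 ^ (n - (i + 1)) ≤ HA.card := by
  have hdisj : Disjoint (insert i A) (Icc (i + 1) n) := by
    refine disjoint_left.mpr fun a ha ha' => ?_
    have := mem_Icc.mp ha'
    rcases mem_insert.mp ha with rfl | ha
    · omega
    · have := mem_Icc.mp (hA ha); omega
  obtain ⟨-, rfl⟩ | ⟨k, ⟨hk, -⟩, rfl⟩ := hg
  · rw [card_image_union_powerset hdisj _ subset_rfl, card_powerset, Nat.card_Icc]
    exact Nat.pow_le_pow_right two_pos (by omega)
  · have hfilter : (Icc (i + 1) n).powerset.filter (fun X => k ∉ X)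
        = ((Icc (i + 1) n).erase k).powerset := by
      ext X
      simp only [mem_filter, mem_powerset, subset_erase]
    rw [card_image_union_powerset hdisj _ (filter_subset _ _), hfilter, card_powerset,
      card_erase_of_mem hk, Nat.card_Icc]
    exact le_of_eq (by congr 1; omega)

lemma Hspec.card_Dset_mul_le_sum {F : Finset (Finset ℕ)} {n : ℕ}
    {H : ℕ → Finset ℕ → Finset (Finset ℕ)} (hH : Hspec F n H) (i : ℕ) :
    (Dset F i).card * 2 ^ (n - (i + 1)) ≤ ∑ A ∈ Dset F i, (H i A).card := by
  rw [← smul_eq_mul, ← sum_const]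
  refine sum_le_sum fun A hA => (hH i A hA).two_pow_le_card ?_
  exact mem_powerset.mp (mem_filter.mp hA).1

def avoiding (F : Finset (Finset ℕ)) (i n : ℕ) : Finset (Finset ℕ) :=
  F.filter (fun S => ∀ j ∈ Icc i n, j ∉ S)

lemma avoiding_mono {F : Finset (Finset ℕ)} {i i' n : ℕ} (h : i ≤ i') :
    avoiding F i n ⊆ avoiding F i' n := by
  intro S hS
  simp only [avoiding, mem_filter] at hS ⊢
  exact ⟨hS.1, fun j hj => hS.2 j (Icc_subset_Icc_left h hj)⟩

lemma Dset_eq_filter_avoiding {F : Finset (Finset ℕ)} {n : ℕ} (hFsub : F ⊆ (Icc 1 n).powerset)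
    (i : ℕ) : Dset F i = (avoiding F i n).filter (fun A => insert i A ∉ F) := by
  ext A
  simp only [Dset, avoiding, mem_filter, mem_powerset, and_assoc]
  refine ⟨fun ⟨hA, hAF, hins⟩ => ⟨hAF, fun j hj hjA => ?_, hins⟩,
    fun ⟨hAF, havoid, hins⟩ => ⟨fun a ha => ?_, hAF, hins⟩⟩
  · have := mem_Icc.mp (hA hjA); have := mem_Icc.mp hj; omega
  · have := mem_Icc.mp (mem_powerset.mp (hFsub hAF) ha)
    refine mem_Icc.mpr ⟨this.1, Nat.le_sub_one_of_lt (Nat.lt_of_not_le fun hia => ?_)⟩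
    exact havoid a (mem_Icc.mpr ⟨hia, this.2⟩) ha

lemma notMem_of_mem_avoiding {F : Finset (Finset ℕ)} {i n : ℕ} (hin : i ≤ n) {S : Finset ℕ}
    (hS : S ∈ avoiding F i n) : i ∉ S :=
  (mem_filter.mp hS).2 i (mem_Icc.mpr ⟨le_rfl, hin⟩)

lemma insert_mem_avoiding_succ {F : Finset (Finset ℕ)} {i n : ℕ} {A : Finset ℕ}
    (hA : A ∈ avoiding F i n) (hiA : insert i A ∈ F) : insert i A ∈ avoiding F (i + 1) n := by
  refine mem_filter.mpr ⟨hiA, fun j hj hjA => ?_⟩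
  have hij := (mem_Icc.mp hj).1
  rcases mem_insert.mp hjA with rfl | hjA
  · omega
  · exact (mem_filter.mp hA).2 j (Icc_subset_Icc_left (Nat.le_add_right i 1) hj) hjA

lemma two_mul_card_avoiding_le {F : Finset (Finset ℕ)} {n i : ℕ}
    (hFsub : F ⊆ (Icc 1 n).powerset) (hin : i ≤ n) :
    2 * (avoiding F i n).card ≤ (avoiding F (i + 1) n).card + (Dset F i).card := by
  set G := avoiding F i n
  set G' := G.filter (fun A => insert i A ∈ F)
  have hsplit : G'.card + (Dset F i).card = G.card := by
    rw [Dset_eq_filter_avoiding hFsub]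
    exact card_filter_add_card_filter_not _
  have himg : G'.image (insert i) ⊆ avoiding F (i + 1) n := by
    simp only [subset_iff, mem_image, G', mem_filter]
    rintro _ ⟨A, ⟨hA, hiA⟩, rfl⟩
    exact insert_mem_avoiding_succ hA hiA
  have hdisj : Disjoint G (G'.image (insert i)) := by
    simp only [disjoint_left, mem_image, not_exists, not_and]
    rintro S hS A - rfl
    exact notMem_of_mem_avoiding hin hS (mem_insert_self i A)
  have hcard_img : (G'.image (insert i)).card = G'.card := by
    refine card_image_of_injOn fun X hX Y hY hXY => ?_
    have hX := notMem_of_mem_avoiding hin (mem_filter.mp hX).1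
    have hY := notMem_of_mem_avoiding hin (mem_filter.mp hY).1
    rw [← erase_insert hX, ← erase_insert hY]
    exact congrArg (erase · i) hXY
  have hle := card_le_card (union_subset (avoiding_mono (Nat.le_add_right i 1)) himg)
  rw [card_union_of_disjoint hdisj, hcard_img] at hle
  omega

lemma le_two_pow_mul_card_avoiding {n : ℕ} {F : Finset (Finset ℕ)}
    (hFsub : F ⊆ (Icc 1 n).powerset) (hempty : ∅ ∈ F)
    {H : ℕ → Finset ℕ → Finset (Finset ℕ)} (hH : Hspec F n H)
    {t : ℕ → ℤ} (ht0 : t 0 = 2 ^ (n - 1))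
    (ht : ∀ i ∈ Icc 1 n, t i = t (i - 1) - ∑ A ∈ Dset F i, ((H i A).card : ℤ))
    {i : ℕ} (hi : 1 ≤ i) (hin : i ≤ n) :
    t (i - 1) ≤ 2 ^ (n - i) * ((avoiding F i n).card : ℤ) := by
  induction i, hi using Nat.le_induction with
  | base =>
    have hcard : 1 ≤ (avoiding F 1 n).card :=
      card_pos.mpr ⟨∅, mem_filter.mpr ⟨hempty, fun j _ => notMem_empty j⟩⟩
    rw [Nat.sub_self, ht0]
    exact le_mul_of_one_le_right (by positivity) (by exact_mod_cast hcard)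
  | succ i hi ih =>
    have IH := ih (by omega)
    have hstep : 2 * ((avoiding F i n).card : ℤ) ≤ (avoiding F (i + 1) n).card + (Dset F i).card :=
      mod_cast two_mul_card_avoiding_le hFsub (by omega)
    have hsum : ((Dset F i).card : ℤ) * 2 ^ (n - (i + 1)) ≤ ∑ A ∈ Dset F i, ((H i A).card : ℤ) :=
      mod_cast hH.card_Dset_mul_le_sum i
    have hpow : (2 : ℤ) ^ (n - i) = 2 * 2 ^ (n - (i + 1)) := by
      rw [← pow_succ']; congr 1; omega
    rw [Nat.add_sub_cancel, ht i (mem_Icc.mpr ⟨hi, by omega⟩)]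
    rw [hpow] at IH
    nlinarith [pow_pos (two_pos : (0 : ℤ) < 2) (n - (i + 1))]

theorem stmt8_general (n : ℕ) (F : Finset (Finset ℕ))
    (hFsub : F ⊆ (Finset.Icc 1 n).powerset) (hF : interClosed F)
    (hmono : ∀ i ∈ Finset.Icc 1 n, ∀ j ∈ Finset.Icc 1 n, i ≤ j →
      (F.filter (fun S => j ∈ S)).card ≤ (F.filter (fun S => i ∈ S)).card)
    (hne : F.filter (fun S => 1 ∈ S) ≠ F)
    (H : ℕ → Finset ℕ → Finset (Finset ℕ)) (hH : Hspec F n H)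
    (t : ℕ → ℤ) (ht0 : t 0 = 2 ^ (n - 1))
    (ht : ∀ i ∈ Finset.Icc 1 n, t i = t (i-1) - ∑ A ∈ Dset F i, ((H i A).card : ℤ)) :
    ∀ i ∈ Finset.Icc 1 n,
      (2 : ℤ) ^ (n - i) * ((F.filter (fun S => ∀ j ∈ Finset.Icc i n, j ∉ S)).card : ℤ)
        ≥ t (i - 1) := by
  intro i hi
  have hempty := empty_mem_of_card_filter_le hFsub hF hmono hne
  exact le_two_pow_mul_card_avoiding hFsub hempty hH ht0 ht (mem_Icc.mp hi).1 (mem_Icc.mp hi).2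

theorem stmt8 (n : ℕ) (hn : 1 ≤ n) (F : Finset (Finset ℕ))
    (hFsub : F ⊆ (Finset.Icc 1 n).powerset) (hF : interClosed F)
    (hmono : ∀ i ∈ Finset.Icc 1 n, ∀ j ∈ Finset.Icc 1 n, i ≤ j →
      (F.filter (fun S => j ∈ S)).card ≤ (F.filter (fun S => i ∈ S)).card)
    (hne : F.filter (fun S => 1 ∈ S) ≠ F)
    (H : ℕ → Finset ℕ → Finset (Finset ℕ)) (hH : Hspec F n H)
    (t : ℕ → ℤ) (ht0 : t 0 = 2 ^ (n - 1))
    (ht : ∀ i ∈ Finset.Icc 1 n, t i = t (i-1) - ∑ A ∈ Dset F i, ((H i A).card : ℤ)) :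
    ∀ i ∈ Finset.Icc 1 n,
      (2 : ℤ) ^ (n - i) * ((F.filter (fun S => ∀ j ∈ Finset.Icc i n, j ∉ S)).card : ℤ)
        ≥ t (i - 1) :=
  stmt8_general n F hFsub hF hmono hne H hH t ht0 ht
end
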